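/- arXiv:2502.07242 — 3 statements merged into one kernel-verified Lean document; each statement's English description precedes it below -/
import Mathlib

section
/- Suppose k ≤ min_{i=1,...,n} deg(min(α_i; F_q)), where min(α_i; F_q) is the minimal polynomial of α_i over F_q and the α_i ∈ F_{q^m} are distinct. Then the nonlinear Reed-Solomon code nRS_q(α⃗, k) has minimum distance d = n, i.e., it meets the Singleton bound d ≤ n − ⌈k/m⌉ + 1. -/
open Polynomial

namespace minpoly

variable {A B : Type*} [Field A] [Ring B] [Algebra A B] {x : B} {p : A[X]}

theorem natDegree_le_of_ne_zero (hp0 : p ≠ 0) (hp : Polynomial.aeval x p = 0) :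
    (minpoly A x).natDegree ≤ p.natDegree :=
  natDegree_le_natDegree (degree_le_of_ne_zero A x hp0 hp)

theorem aeval_ne_zero_of_natDegree_lt (hp0 : p ≠ 0)
    (hlt : p.natDegree < (minpoly A x).natDegree) :
    Polynomial.aeval x p ≠ 0 :=
  fun hp => (natDegree_le_of_ne_zero hp0 hp).not_gt hlt

end minpoly

theorem stmt1_general {F K : Type*} [Field F] [Field K] [Algebra F K]
    (n k : ℕ) (α : Fin n → K)
    (hk : ∀ i, k ≤ (minpoly F (α i)).natDegree) :
    ∀ f : F[X], f ≠ 0 → f.degree < k → ∀ i, Polynomial.aeval (α i) f ≠ 0 := by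
  intro f hf hdeg i
  exact minpoly.aeval_ne_zero_of_natDegree_lt hf
    (((natDegree_lt_iff_degree_lt hf).mpr hdeg).trans_le (hk i))

/-- If `k ≤ min_i deg (min(αᵢ; F))` with the `αᵢ ∈ K` distinct, then the nonlinear
Reed–Solomon code `nRS_q(α⃗, k)` has minimum distance `n`: every nonzero codeword has
no zero coordinate (so it meets the Singleton bound `d ≤ n - ⌈k/m⌉ + 1`). -/
theorem stmt1 {F K : Type*} [Field F] [Field K] [Algebra F K] [Fintype F] [Fintype K]
    (q m n k : ℕ) (hq : IsPrimePow q) (hF : Fintype.card F = q)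
    (hK : Fintype.card K = q ^ m) (α : Fin n → K) (hinj : Function.Injective α)
    (hk : ∀ i, k ≤ (minpoly F (α i)).natDegree) :
    ∀ f : F[X], f ≠ 0 → f.degree < k → ∀ i, Polynomial.aeval (α i) f ≠ 0 :=
  stmt1_general n k α hk
end

section
/- Let α_1,...,α_n be distinct elements of a field F and define u_i = (∏_{j≠i}(α_i − α_j))^{-1}. Then for any polynomials f, g over F with deg f < k and deg g < n − k (where k ≤ n), the vectors (f(α_1),...,f(α_n)) and (u_1 g(α_1),...,u_n g(α_n)) are orthogonal under the standard Euclidean inner product: ∑_{i=1}^n f(α_i) u_i g(α_i) = 0. -/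
open Polynomial

/-- Lagrange orthogonality: for distinct `α₁, …, αₙ` in a field `F`, setting
`uᵢ = (∏_{j ≠ i} (αᵢ - αⱼ))⁻¹`, any `f` of degree `< k` and `g` of degree `< n - k`
(with `k ≤ n`) satisfy `∑ᵢ f(αᵢ) · uᵢ g(αᵢ) = 0`. -/
theorem stmt3 {F : Type*} [Field F] (n k : ℕ) (hk : k ≤ n)
    (α : Fin n → F) (hinj : Function.Injective α) (u : Fin n → F)
    (hu : ∀ i, u i = (∏ j ∈ Finset.univ.erase i, (α i - α j))⁻¹)
    (f g : F[X]) (hf : f.degree < k) (hg : g.degree < (n - k : ℕ)) :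
    ∑ i, f.eval (α i) * (u i * g.eval (α i)) = 0 := by
  by_cases hf0 : f = 0
  · simp [hf0]
  by_cases hg0 : g = 0
  · simp [hg0]
  -- degrees
  have hk1 : 1 ≤ k := by
    rcases Nat.eq_zero_or_pos k with h | h
    · rw [h, Nat.cast_zero, Nat.WithBot.lt_zero_iff, degree_eq_bot] at hf
      exact absurd hf hf0
    · exact h
  have hnk1 : 1 ≤ n - k := by
    rcases Nat.eq_zero_or_pos (n - k) with h | h
    · rw [h, Nat.cast_zero, Nat.WithBot.lt_zero_iff, degree_eq_bot] at hg
      exact absurd hg hg0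
    · exact h
  have hn2 : 2 ≤ n := by omega
  have hndf : f.natDegree ≤ k - 1 := by
    have := natDegree_lt_iff_degree_lt (n := k) hf0 |>.mpr hf
    omega
  have hndg : g.natDegree ≤ n - k - 1 := by
    have := natDegree_lt_iff_degree_lt (n := n - k) hg0 |>.mpr hg
    omega
  have hfg0 : f * g ≠ 0 := mul_ne_zero hf0 hg0
  have hnd : (f * g).natDegree ≤ n - 2 := by
    rw [natDegree_mul hf0 hg0]; omega
  have hvs : Set.InjOn α (Finset.univ : Finset (Fin n)) := hinj.injOn
  have hdeg : (f * g).degree < ((Finset.univ : Finset (Fin n)).card : ℕ) := by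
    rw [Finset.card_univ, Fintype.card_fin]
    calc (f * g).degree ≤ ((n - 2 : ℕ) : WithBot ℕ) := degree_le_of_natDegree_le hnd
    _ < (n : ℕ) := by exact_mod_cast Nat.lt_of_le_of_lt (by omega) (by omega : n - 1 < n)
  have key := Lagrange.eq_interpolate (s := (Finset.univ : Finset (Fin n))) (v := α) hvs hdeg
  -- take coefficient (n-1) on both sides
  have hc0 : (f * g).coeff (n - 1) = 0 :=
    coeff_eq_zero_of_natDegree_lt (by omega)
  have hbasis : ∀ i : Fin n, (Lagrange.basis Finset.univ α i).coeff (n - 1) = u i := by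
    intro i
    rw [Lagrange.basis_eq_prod_sub_inv_mul_nodal_div (Finset.mem_univ i),
      ← Lagrange.nodal_erase_eq_nodal_div (Finset.mem_univ i), coeff_C_mul]
    have hcard : (Finset.univ.erase i).card = n - 1 := by
      rw [Finset.card_erase_of_mem (Finset.mem_univ i), Finset.card_univ, Fintype.card_fin]
    have hmonic : (Lagrange.nodal (Finset.univ.erase i) α).Monic := Lagrange.nodal_monic
    have : (Lagrange.nodal (Finset.univ.erase i) α).coeff (n - 1) = 1 := by
      have := hmonic.coeff_natDegree
      rwa [Lagrange.natDegree_nodal, hcard] at this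
    rw [this, mul_one, hu, Lagrange.nodalWeight, Finset.prod_inv_distrib]
  have := congrArg (fun p => p.coeff (n - 1)) key
  simp only [hc0, Lagrange.interpolate_apply, finset_sum_coeff, coeff_C_mul] at this
  rw [this]
  apply Finset.sum_congr rfl
  intro i _
  rw [hbasis i, eval_mul]
  ring
end

section
/- Let R = F_{q^a}[X;σ] be a skew polynomial ring over a finite field with σ the q-Frobenius. An element s ∈ R is a left divisor of u·t and a right divisor of t·u for all u ∈ R (i.e., s is a total divisor of t) if and only if s left-divides αX^k·t and right-divides t·αX^k for all α ∈ F_{q^a} and all k < deg s. -/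
noncomputable section

variable {K : Type*} [Field K]

/-- The twisted shift operator `X` (sends `∑ aᵢ Yⁱ` to `∑ σ(aᵢ) Yⁱ⁺¹` on coefficient
sequences), realizing the indeterminate of the skew polynomial ring `K[X;σ]`. -/
def skewX (σ : K →+* K) : AddMonoid.End (ℕ → K) where
  toFun v n := if n = 0 then 0 else σ (v (n - 1))
  map_zero' := by funext n; simp
  map_add' v w := by
    funext n
    by_cases h : n = 0 <;> simp [h, Pi.add_apply]

/-- Left multiplication by the constant `a`, realizing the embedding of `K`
into the skew polynomial ring `K[X;σ]`. -/
def skewC (a : K) : AddMonoid.End (ℕ → K) where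
  toFun v n := a * v n
  map_zero' := by funext n; simp
  map_add' v w := by funext n; simp [Pi.add_apply, mul_add]

/-- The skew polynomial ring `K[X;σ]`, realized concretely as the subring of additive
endomorphisms of `ℕ → K` generated by the constants and the twisted shift. -/
def SkewPolyRing (σ : K →+* K) : Subring (AddMonoid.End (ℕ → K)) :=
  Subring.closure (Set.range skewC ∪ {skewX σ})

/-- The indeterminate `X` as an element of `K[X;σ]`. -/
def Xel (σ : K →+* K) : SkewPolyRing σ :=
  ⟨skewX σ, Subring.subset_closure (Set.mem_union_right _ rfl)⟩

/-- The constant `a` as an element of `K[X;σ]`. -/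
def Cel (σ : K →+* K) (a : K) : SkewPolyRing σ :=
  ⟨skewC a, Subring.subset_closure (Set.mem_union_left _ ⟨a, rfl⟩)⟩

/-- The `i`-th coefficient of a skew polynomial (read off by acting on the
delta sequence at `0`). -/
def coeffS (σ : K →+* K) (p : SkewPolyRing σ) (i : ℕ) : K :=
  (p : AddMonoid.End (ℕ → K)) (fun n => if n = 0 then 1 else 0) i

/-- The degree of a skew polynomial. -/
def natDegS (σ : K →+* K) (p : SkewPolyRing σ) : ℕ :=
  sSup {i | coeffS σ p i ≠ 0}

/-- A skew polynomial is monic if its leading coefficient is `1`. -/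
def MonicS (σ : K →+* K) (p : SkewPolyRing σ) : Prop :=
  coeffS σ p (natDegS σ p) = 1

/-- `s` left-divides `t`. -/
def LDvd (σ : K →+* K) (s t : SkewPolyRing σ) : Prop := ∃ u, t = s * u

/-- `s` right-divides `t`. -/
def RDvd (σ : K →+* K) (s t : SkewPolyRing σ) : Prop := ∃ u, t = u * s

/-- `s` is a total divisor of `t`: `s` left-divides `u*t` and right-divides `t*u`
for every `u`. -/
def TotalDvd (σ : K →+* K) (s t : SkewPolyRing σ) : Prop :=
  ∀ u, LDvd σ s (u * t) ∧ RDvd σ s (t * u)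

/-- `d` is the monic greatest common right divisor of `f` and `g`. -/
def IsGcrd (σ : K →+* K) (d f g : SkewPolyRing σ) : Prop :=
  MonicS σ d ∧ RDvd σ d f ∧ RDvd σ d g ∧ ∀ e, RDvd σ e f → RDvd σ e g → RDvd σ e d

/-- The two-sided ideal `RtR` generated by `t`, as an additive subgroup. -/
def TwoSidedGen (σ : K →+* K) (t : SkewPolyRing σ) : AddSubgroup (SkewPolyRing σ) :=
  AddSubgroup.closure {x | ∃ r r', x = r * t * r'}

/-!
Every skew polynomial is a finite sum of monomials `α X^k`, and `X^i α = σ^i(α) X^i`. Right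
division by `s ≠ 0` always works, since the leading coefficient `σ^N(c)` of `α X^N s` is a unit;
left division needs `c σ^d(α)` to hit every value, i.e. `σ` surjective, which holds for any
endomorphism of a finite field. So `u = s w + r` and `u = w' s + r'` with `deg r, deg r' < deg s`,
whence `u t = s (w t) + r t` and `t u = (t w') s + t r'`, and `r t`, `t r'` are sums of the
monomial cases.
-/

theorem skewC_zero : skewC (0 : K) = 0 := by
  ext v n; exact zero_mul _

theorem skewC_add (a b : K) : skewC (a + b) = skewC a + skewC b := by
  ext v n; exact add_mul _ _ _

theorem skewC_mul_skewC (a b : K) : skewC a * skewC b = skewC (a * b) := by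
  ext v n; exact (mul_assoc _ _ _).symm

theorem skewX_mul_skewC (σ : K →+* K) (b : K) :
    skewX σ * skewC b = skewC (σ b) * skewX σ := by
  ext v n
  change (if n = 0 then 0 else σ (b * v (n - 1))) = σ b * (if n = 0 then 0 else σ (v (n - 1)))
  split_ifs <;> simp

theorem skewX_pow_apply (σ : K →+* K) (k : ℕ) (v : ℕ → K) (n : ℕ) :
    (skewX σ ^ k) v n = if n < k then 0 else (σ ^ k) (v (n - k)) := by
  induction k generalizing n with
  | zero => simp
  | succ k ih =>
    rw [pow_succ', AddMonoid.End.coe_mul, Function.comp_apply]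
    change (if n = 0 then 0 else σ ((skewX σ ^ k) v (n - 1))) = _
    rw [ih]
    split_ifs <;> first | rfl | omega | simp [pow_succ', Nat.sub_sub, Nat.add_comm 1 k]

theorem skewC_mul_skewX_pow_apply (σ : K →+* K) (a : K) (k : ℕ) (v : ℕ → K) (n : ℕ) :
    (skewC a * skewX σ ^ k) v n = if n < k then 0 else a * (σ ^ k) (v (n - k)) := by
  change a * (skewX σ ^ k) v n = _
  rw [skewX_pow_apply]
  split_ifs <;> simp

namespace SkewPolyRing

variable {σ : K →+* K}

theorem Cel_zero : Cel σ 0 = 0 := Subtype.ext skewC_zero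

theorem Cel_add (a b : K) : Cel σ (a + b) = Cel σ a + Cel σ b := Subtype.ext (skewC_add a b)

theorem Cel_one : Cel σ 1 = 1 := by
  ext v n; exact one_mul _

theorem Cel_mul_Cel (a b : K) : Cel σ a * Cel σ b = Cel σ (a * b) :=
  Subtype.ext (skewC_mul_skewC a b)

theorem Xel_pow_mul_Cel (i : ℕ) (b : K) :
    Xel σ ^ i * Cel σ b = Cel σ ((σ ^ i) b) * Xel σ ^ i := by
  induction i generalizing b with
  | zero => simp
  | succ i ih =>
    have hX : Xel σ * Cel σ b = Cel σ (σ b) * Xel σ := Subtype.ext (skewX_mul_skewC σ b)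
    rw [pow_succ, mul_assoc, hX, ← mul_assoc, ih, mul_assoc, ← pow_succ]
    rfl

variable (σ) in
def monomial (a : K) (n : ℕ) : SkewPolyRing σ := Cel σ a * Xel σ ^ n

theorem monomial_zero (n : ℕ) : monomial σ 0 n = 0 := by
  rw [monomial, Cel_zero, zero_mul]

theorem monomial_add (a b : K) (n : ℕ) :
    monomial σ (a + b) n = monomial σ a n + monomial σ b n := by
  rw [monomial, Cel_add, add_mul]; rfl

theorem monomial_mul_monomial (a b : K) (i j : ℕ) :
    monomial σ a i * monomial σ b j = monomial σ (a * (σ ^ i) b) (i + j) := by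
  rw [monomial, monomial, monomial, mul_assoc, ← mul_assoc (Xel σ ^ i), Xel_pow_mul_Cel,
    mul_assoc, ← pow_add, ← mul_assoc, Cel_mul_Cel]

variable (σ) in
def ofFinsupp : (ℕ →₀ K) →+ SkewPolyRing σ :=
  Finsupp.liftAddHom fun n =>
    { toFun := fun a => monomial σ a n
      map_zero' := monomial_zero n
      map_add' := fun a b => monomial_add a b n }

theorem ofFinsupp_apply (f : ℕ →₀ K) : ofFinsupp σ f = f.sum fun n a => monomial σ a n :=
  Finsupp.liftAddHom_apply _ _

theorem ofFinsupp_single (a : K) (n : ℕ) : ofFinsupp σ (Finsupp.single n a) = monomial σ a n :=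
  Finsupp.liftAddHom_apply_single _ _ _

theorem mul_mem_range_ofFinsupp {p q : SkewPolyRing σ} (hp : p ∈ (ofFinsupp σ).range)
    (hq : q ∈ (ofFinsupp σ).range) : p * q ∈ (ofFinsupp σ).range := by
  obtain ⟨f, rfl⟩ := hp
  obtain ⟨g, rfl⟩ := hq
  induction f using Finsupp.induction_linear with
  | zero => rw [map_zero, zero_mul]; exact zero_mem _
  | add f f' hf hf' => rw [map_add, add_mul]; exact add_mem hf hf'
  | single i a =>
    induction g using Finsupp.induction_linear with
    | zero => rw [map_zero, mul_zero]; exact zero_mem _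
    | add g g' hg hg' => rw [map_add, mul_add]; exact add_mem hg hg'
    | single j b =>
      rw [ofFinsupp_single, ofFinsupp_single, monomial_mul_monomial, ← ofFinsupp_single]
      exact ⟨_, rfl⟩

theorem monomial_mem_range_ofFinsupp (a : K) (n : ℕ) : monomial σ a n ∈ (ofFinsupp σ).range :=
  ⟨_, ofFinsupp_single a n⟩

theorem ofFinsupp_surjective : Function.Surjective (ofFinsupp σ) := by
  suffices ∀ x (hx : x ∈ Subring.closure (Set.range skewC ∪ {skewX σ})),
      (⟨x, hx⟩ : SkewPolyRing σ) ∈ (ofFinsupp σ).range from fun p => this p.1 p.2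
  intro x hx
  induction hx using Subring.closure_induction with
  | mem x hx =>
    rcases hx with ⟨a, rfl⟩ | rfl
    · change Cel σ a ∈ _
      rw [← mul_one (Cel σ a), ← pow_zero (Xel σ)]
      exact monomial_mem_range_ofFinsupp a 0
    · change Xel σ ∈ _
      rw [← one_mul (Xel σ), ← Cel_one, ← pow_one (Xel σ)]
      exact monomial_mem_range_ofFinsupp 1 1
  | zero => exact zero_mem _
  | one =>
    change (1 : SkewPolyRing σ) ∈ _
    rw [← pow_zero (Xel σ), ← one_mul (Xel σ ^ 0), ← Cel_one]
    exact monomial_mem_range_ofFinsupp 1 0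
  | add x y _ _ hx hy => exact add_mem hx hy
  | neg x _ hx => exact neg_mem hx
  | mul x y _ _ hx hy => exact mul_mem_range_ofFinsupp hx hy

theorem coeffS_zero (n : ℕ) : coeffS σ 0 n = 0 := rfl

theorem coeffS_add (p q : SkewPolyRing σ) (n : ℕ) :
    coeffS σ (p + q) n = coeffS σ p n + coeffS σ q n := rfl

theorem coeffS_sub (p q : SkewPolyRing σ) (n : ℕ) :
    coeffS σ (p - q) n = coeffS σ p n - coeffS σ q n := rfl

theorem coeffS_monomial_mul (b : K) (k : ℕ) (p : SkewPolyRing σ) (m : ℕ) :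
    coeffS σ (monomial σ b k * p) m = if m < k then 0 else b * (σ ^ k) (coeffS σ p (m - k)) := by
  rw [coeffS, MulMemClass.coe_mul, monomial, MulMemClass.coe_mul, SubmonoidClass.coe_pow]
  exact skewC_mul_skewX_pow_apply σ b k _ m

theorem coeffS_monomial (a : K) (n m : ℕ) :
    coeffS σ (monomial σ a n) m = if m = n then a else 0 := by
  rw [← mul_one (monomial σ a n), coeffS_monomial_mul]
  change (if m < n then 0 else a * (σ ^ n) (if m - n = 0 then 1 else 0)) = _
  split_ifs <;> first | omega | simp

theorem coeffS_ofFinsupp (f : ℕ →₀ K) (m : ℕ) : coeffS σ (ofFinsupp σ f) m = f m := by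
  induction f using Finsupp.induction_linear with
  | zero => rw [map_zero, coeffS_zero, Finsupp.zero_apply]
  | add f g hf hg => rw [map_add, coeffS_add, hf, hg, Finsupp.add_apply]
  | single n a =>
    rw [ofFinsupp_single, coeffS_monomial, Finsupp.single_apply]
    exact if_congr eq_comm rfl rfl

theorem coeffS_mul_monomial (p : SkewPolyRing σ) (b : K) (k m : ℕ) :
    coeffS σ (p * monomial σ b k) m =
      if m < k then 0 else coeffS σ p (m - k) * (σ ^ (m - k)) b := by
  obtain ⟨f, rfl⟩ := ofFinsupp_surjective p
  rw [coeffS_ofFinsupp]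
  induction f using Finsupp.induction_linear with
  | zero => simp [coeffS_zero]
  | add f g hf hg =>
    rw [map_add, add_mul, coeffS_add, hf, hg, Finsupp.add_apply]
    split_ifs <;> ring
  | single n a =>
    rw [ofFinsupp_single, monomial_mul_monomial, coeffS_monomial, Finsupp.single_apply]
    by_cases hm : m = n + k
    · simp [hm]
    · rw [if_neg hm]
      split_ifs <;> first | rfl | omega | simp

theorem finite_setOf_coeffS_ne_zero (p : SkewPolyRing σ) : {n | coeffS σ p n ≠ 0}.Finite := by
  obtain ⟨f, rfl⟩ := ofFinsupp_surjective p
  simp_rw [coeffS_ofFinsupp]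
  exact f.hasFiniteSupport

theorem coeffS_eq_zero_of_natDegS_lt {p : SkewPolyRing σ} {n : ℕ} (hn : natDegS σ p < n) :
    coeffS σ p n = 0 := by
  by_contra h
  exact hn.not_ge (le_csSup (finite_setOf_coeffS_ne_zero p).bddAbove h)

theorem coeffS_natDegS_ne_zero {p : SkewPolyRing σ} (hp : p ≠ 0) :
    coeffS σ p (natDegS σ p) ≠ 0 := by
  refine Nat.sSup_mem ?_ (finite_setOf_coeffS_ne_zero p).bddAbove
  obtain ⟨f, rfl⟩ := ofFinsupp_surjective p
  obtain ⟨n, hn⟩ := Finsupp.ne_iff.mp fun hf : f = 0 => hp (by rw [hf, map_zero])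
  exact ⟨n, by rwa [← coeffS_ofFinsupp (σ := σ)] at hn⟩

variable (σ) in
def DegLt (p : SkewPolyRing σ) (n : ℕ) : Prop := ∀ m, n ≤ m → coeffS σ p m = 0

theorem degLt_natDegS_add_one (p : SkewPolyRing σ) : DegLt σ p (natDegS σ p + 1) :=
  fun _ hm => coeffS_eq_zero_of_natDegS_lt hm

theorem DegLt.mono {p : SkewPolyRing σ} {m n : ℕ} (hp : DegLt σ p m) (hmn : m ≤ n) :
    DegLt σ p n :=
  fun i hi => hp i (hmn.trans hi)

theorem DegLt.lt_of_mem_support {f : ℕ →₀ K} {n k : ℕ} (hf : DegLt σ (ofFinsupp σ f) n)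
    (hk : k ∈ f.support) : k < n := by
  by_contra hkn
  exact Finsupp.mem_support_iff.mp hk (by rw [← coeffS_ofFinsupp]; exact hf k (not_lt.mp hkn))

-- The division algorithm by a divisor of degree `d`, abstracted over the one-sided ideal `P`.
theorem exists_degLt_sub_of_step {P : SkewPolyRing σ → Prop} (zero : P 0)
    (add : ∀ x y, P x → P y → P (x + y)) {d : ℕ}
    (step : ∀ N u, DegLt σ u (d + N + 1) → ∃ m, P m ∧ DegLt σ (u - m) (d + N))
    (u : SkewPolyRing σ) : ∃ m, P m ∧ DegLt σ (u - m) d := by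
  suffices ∀ N u, DegLt σ u (d + N) → ∃ m, P m ∧ DegLt σ (u - m) d from
    this _ u ((degLt_natDegS_add_one u).mono (Nat.le_add_left _ _))
  intro N
  induction N with
  | zero => exact fun u hu => ⟨0, zero, by rwa [sub_zero]⟩
  | succ N ih =>
    intro u hu
    obtain ⟨m, hm, hum⟩ := step N u hu
    obtain ⟨m', hm', hum'⟩ := ih (u - m) hum
    exact ⟨m + m', add m m' hm hm', by rwa [sub_add_eq_sub_sub]⟩

-- `LDvd σ s` is definitionally `(s ∣ ·)`, so the left-hand side uses Mathlib's `Dvd` API.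
theorem exists_dvd_degLt_sub (hσ : Function.Surjective σ) {s : SkewPolyRing σ} (hs : s ≠ 0)
    (N : ℕ) (u : SkewPolyRing σ) (hu : DegLt σ u (natDegS σ s + N + 1)) :
    ∃ m, s ∣ m ∧ DegLt σ (u - m) (natDegS σ s + N) := by
  set d := natDegS σ s
  obtain ⟨e, he⟩ : ∃ e, (σ ^ d) e = coeffS σ u (d + N) / coeffS σ s d := by
    rw [RingHom.coe_pow]
    exact hσ.iterate d _
  refine ⟨s * monomial σ e N, dvd_mul_right _ _, fun i hi => ?_⟩
  rw [coeffS_sub, coeffS_mul_monomial, if_neg (by omega)]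
  rcases hi.eq_or_lt with rfl | hi
  · rw [Nat.add_sub_cancel, he, mul_div_cancel₀ _ (coeffS_natDegS_ne_zero hs), sub_self]
  · rw [hu i hi, coeffS_eq_zero_of_natDegS_lt (by omega : d < i - N), zero_mul, sub_zero]

theorem exists_rDvd_degLt_sub {s : SkewPolyRing σ} (hs : s ≠ 0) (N : ℕ) (u : SkewPolyRing σ)
    (hu : DegLt σ u (natDegS σ s + N + 1)) :
    ∃ m, RDvd σ s m ∧ DegLt σ (u - m) (natDegS σ s + N) := by
  set d := natDegS σ s
  have hc : (σ ^ N) (coeffS σ s d) ≠ 0 := (map_ne_zero _).mpr (coeffS_natDegS_ne_zero hs)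
  refine ⟨monomial σ (coeffS σ u (d + N) / (σ ^ N) (coeffS σ s d)) N * s, ⟨_, rfl⟩,
    fun i hi => ?_⟩
  rw [coeffS_sub, coeffS_monomial_mul, if_neg (by omega)]
  rcases hi.eq_or_lt with rfl | hi
  · rw [Nat.add_sub_cancel, div_mul_cancel₀ _ hc, sub_self]
  · rw [hu i hi, coeffS_eq_zero_of_natDegS_lt (by omega : d < i - N), map_zero, mul_zero,
      sub_zero]

theorem rDvd_zero (s : SkewPolyRing σ) : RDvd σ s 0 := ⟨0, (zero_mul s).symm⟩

theorem RDvd.add {s x y : SkewPolyRing σ} (hx : RDvd σ s x) (hy : RDvd σ s y) :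
    RDvd σ s (x + y) := by
  obtain ⟨u, rfl⟩ := hx
  obtain ⟨v, rfl⟩ := hy
  exact ⟨u + v, (add_mul u v s).symm⟩

theorem RDvd.mul_left {s x : SkewPolyRing σ} (hx : RDvd σ s x) (t : SkewPolyRing σ) :
    RDvd σ s (t * x) := by
  obtain ⟨u, rfl⟩ := hx
  exact ⟨t * u, (mul_assoc t u s).symm⟩

theorem dvd_mul_of_degLt {s t r : SkewPolyRing σ} {d : ℕ}
    (h : ∀ α k, k < d → s ∣ monomial σ α k * t) (hr : DegLt σ r d) : s ∣ r * t := by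
  obtain ⟨f, rfl⟩ := ofFinsupp_surjective r
  rw [ofFinsupp_apply, Finsupp.sum, Finset.sum_mul]
  exact Finset.dvd_sum fun k hk => h _ k (hr.lt_of_mem_support hk)

theorem rDvd_mul_of_degLt {s t r : SkewPolyRing σ} {d : ℕ}
    (h : ∀ α k, k < d → RDvd σ s (t * monomial σ α k)) (hr : DegLt σ r d) :
    RDvd σ s (t * r) := by
  obtain ⟨f, rfl⟩ := ofFinsupp_surjective r
  rw [ofFinsupp_apply, Finsupp.sum, Finset.mul_sum]
  exact Finset.sum_induction _ (RDvd σ s) (fun _ _ => RDvd.add) (rDvd_zero s)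
    fun k hk => h _ k (hr.lt_of_mem_support hk)

theorem dvd_mul_of_forall_dvd_monomial_mul (hσ : Function.Surjective σ) {s t : SkewPolyRing σ}
    (hs : s ≠ 0) (h : ∀ α k, k < natDegS σ s → s ∣ monomial σ α k * t) (u : SkewPolyRing σ) :
    s ∣ u * t := by
  obtain ⟨m, hm, hr⟩ := exists_degLt_sub_of_step (dvd_zero s) (fun _ _ => dvd_add)
    (exists_dvd_degLt_sub hσ hs) u
  rw [← add_sub_cancel m u, add_mul]
  exact dvd_add (hm.mul_right t) (dvd_mul_of_degLt h hr)

theorem rDvd_mul_of_forall_rDvd_mul_monomial {s t : SkewPolyRing σ} (hs : s ≠ 0)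
    (h : ∀ α k, k < natDegS σ s → RDvd σ s (t * monomial σ α k)) (u : SkewPolyRing σ) :
    RDvd σ s (t * u) := by
  obtain ⟨m, hm, hr⟩ := exists_degLt_sub_of_step (rDvd_zero s) (fun _ _ => RDvd.add)
    (exists_rDvd_degLt_sub hs) u
  rw [← add_sub_cancel m u, mul_add]
  exact RDvd.add (RDvd.mul_left hm t) (rDvd_mul_of_degLt h hr)

end SkewPolyRing

theorem stmt8_general {K : Type*} [Field K] [Fintype K]
    (σ : K →+* K)
    (s t : SkewPolyRing σ) (hs : s ≠ 0) :
    TotalDvd σ s t ↔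
      ∀ (α : K) (k : ℕ), k < natDegS σ s →
        LDvd σ s (Cel σ α * Xel σ ^ k * t) ∧ RDvd σ s (t * (Cel σ α * Xel σ ^ k)) := by
  refine ⟨fun h α k _ => h _, fun h u => ⟨?_, ?_⟩⟩
  · exact SkewPolyRing.dvd_mul_of_forall_dvd_monomial_mul
      (Finite.surjective_of_injective σ.injective) hs (fun α k hk => (h α k hk).1) u
  · exact SkewPolyRing.rDvd_mul_of_forall_rDvd_mul_monomial hs (fun α k hk => (h α k hk).2) u

/-- In `R = K[X;σ]` with `K = F_{q^a}` and `σ` the `q`-Frobenius, a nonzero `s` is a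
total divisor of `t` iff `s` left-divides `αX^k · t` and right-divides `t · αX^k`
for all `α ∈ K` and all `k < deg s`. -/
theorem stmt8 {K : Type*} [Field K] [Fintype K]
    (q a : ℕ) (hq : IsPrimePow q) (hK : Fintype.card K = q ^ a)
    (σ : K →+* K) (hσ : ∀ x : K, σ x = x ^ q)
    (s t : SkewPolyRing σ) (hs : s ≠ 0) :
    TotalDvd σ s t ↔
      ∀ (α : K) (k : ℕ), k < natDegS σ s →
        LDvd σ s (Cel σ α * Xel σ ^ k * t) ∧ RDvd σ s (t * (Cel σ α * Xel σ ^ k)) :=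
  stmt8_general σ s t hs

end
end
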